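/- arXiv:2006.16887 — 3 statements merged into one kernel-verified Lean document; each statement's English description precedes it below -/
import Mathlib

section
/- For every n ≥ 1, the thinness of the crown graph CR_n is at least n/2. -/
open SimpleGraph

/-- An ordering (given by an injective rank function `f`) and a partition (given by a
coloring `c`) are consistent: for `r < s < t`, if `r, s` are in the same class and
`t` is adjacent to `r`, then `t` is adjacent to `s`. -/
def Consistent {V : Type*} (G : SimpleGraph V) (f : V → ℕ) (c : V → ℕ) : Prop :=
  ∀ r s t : V, f r < f s → f s < f t → c r = c s → G.Adj t r → G.Adj t s

/-- Strong consistency: consistency with the ordering and with its reverse. -/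
def StronglyConsistent {V : Type*} (G : SimpleGraph V) (f : V → ℕ) (c : V → ℕ) : Prop :=
  Consistent G f c ∧
    ∀ r s t : V, f r < f s → f s < f t → c s = c t → G.Adj t r → G.Adj s r

/-- The thinness of a graph. -/
noncomputable def thin {V : Type*} (G : SimpleGraph V) : ℕ :=
  sInf {k | ∃ f c : V → ℕ, Function.Injective f ∧ (∀ v, c v < k) ∧ Consistent G f c}

/-- The proper thinness of a graph. -/
noncomputable def pthin {V : Type*} (G : SimpleGraph V) : ℕ :=
  sInf {k | ∃ f c : V → ℕ, Function.Injective f ∧ (∀ v, c v < k) ∧ StronglyConsistent G f c}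

/-- Independent thinness: classes must be independent sets. -/
noncomputable def indthin {V : Type*} (G : SimpleGraph V) : ℕ :=
  sInf {k | ∃ f c : V → ℕ, Function.Injective f ∧ (∀ v, c v < k) ∧ Consistent G f c ∧
    ∀ u v : V, c u = c v → ¬ G.Adj u v}

/-- Independent proper thinness. -/
noncomputable def indpthin {V : Type*} (G : SimpleGraph V) : ℕ :=
  sInf {k | ∃ f c : V → ℕ, Function.Injective f ∧ (∀ v, c v < k) ∧ StronglyConsistent G f c ∧
    ∀ u v : V, c u = c v → ¬ G.Adj u v}

/-- Complete thinness: classes must be cliques. -/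
noncomputable def compthin {V : Type*} (G : SimpleGraph V) : ℕ :=
  sInf {k | ∃ f c : V → ℕ, Function.Injective f ∧ (∀ v, c v < k) ∧ Consistent G f c ∧
    ∀ u v : V, u ≠ v → c u = c v → G.Adj u v}

/-- Complete proper thinness. -/
noncomputable def comppthin {V : Type*} (G : SimpleGraph V) : ℕ :=
  sInf {k | ∃ f c : V → ℕ, Function.Injective f ∧ (∀ v, c v < k) ∧ StronglyConsistent G f c ∧
    ∀ u v : V, u ≠ v → c u = c v → G.Adj u v}

/-- The incompatibility graph `G_<` of a graph and an ordering: for `v < w`,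
`vw` is an edge iff there is `z > w` adjacent to `v` but not to `w`. -/
def incompat {V : Type*} (G : SimpleGraph V) (f : V → ℕ) : SimpleGraph V where
  Adj v w :=
    (f v < f w ∧ ∃ z, f w < f z ∧ G.Adj z v ∧ ¬ G.Adj z w) ∨
    (f w < f v ∧ ∃ z, f v < f z ∧ G.Adj z w ∧ ¬ G.Adj z v)
  symm := ⟨fun v w h => h.symm⟩
  loopless := ⟨fun v h => by rcases h with ⟨h, _⟩ | ⟨h, _⟩ <;> exact lt_irrefl _ h⟩

/-- The join of two graphs. -/
def joinG {V₁ V₂ : Type*} (G₁ : SimpleGraph V₁) (G₂ : SimpleGraph V₂) :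
    SimpleGraph (V₁ ⊕ V₂) where
  Adj x y := match x, y with
    | Sum.inl u, Sum.inl v => G₁.Adj u v
    | Sum.inr u, Sum.inr v => G₂.Adj u v
    | Sum.inl _, Sum.inr _ => True
    | Sum.inr _, Sum.inl _ => True
  symm := by constructor; rintro (u | u) (v | v) h
             · exact G₁.symm.symm _ _ h
             · trivial
             · trivial
             · exact G₂.symm.symm _ _ h
  loopless := by constructor; rintro (u | u) h
                 · exact G₁.loopless.irrefl u h
                 · exact G₂.loopless.irrefl u h

/-- A graph is complete iff all pairs of distinct vertices are adjacent. -/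
def IsCompleteGraph {V : Type*} (G : SimpleGraph V) : Prop :=
  ∀ u v : V, u ≠ v → G.Adj u v

/-- The clique number of a graph. -/
noncomputable def omegaNum {V : Type*} (G : SimpleGraph V) : ℕ :=
  sSup {n | ∃ s : Finset V, s.card = n ∧ ∀ u ∈ s, ∀ v ∈ s, u ≠ v → G.Adj u v}

/-- The independence number of a graph. -/
noncomputable def alphaNum {V : Type*} (G : SimpleGraph V) : ℕ :=
  sSup {n | ∃ s : Finset V, s.card = n ∧ ∀ u ∈ s, ∀ v ∈ s, u ≠ v → ¬ G.Adj u v}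


/-- The crown graph `CR n`: `K_{n,n}` minus a perfect matching. -/
def crownGraph (n : ℕ) : SimpleGraph (Fin n ⊕ Fin n) where
  Adj x y := match x, y with
    | Sum.inl i, Sum.inr j => i ≠ j
    | Sum.inr i, Sum.inl j => i ≠ j
    | _, _ => False
  symm := by constructor; rintro (i | i) (j | j) h
             · exact h
             · exact fun hh => h hh.symm
             · exact fun hh => h hh.symm
             · exact h
  loopless := by constructor; rintro (i | i) h <;> exact h

/-!
In any ordering, each pair `{inl i, inr i}` of the removed matching has an endpoint preceding its
partner. Two such endpoints `v, w` on the same side, `v` before `w`, lie in different classes: the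
partner of `w` comes after both and is adjacent to `v` but not to `w`. Hence `i` is determined by
the class and the side of its first endpoint, so `n ≤ 2k` for any consistent partition into `k`
classes.
-/

theorem Consistent.color_ne {V : Type*} {G : SimpleGraph V} {f c : V → ℕ}
    (h : Consistent G f c) {r s t : V} (hrs : f r < f s) (hst : f s < f t)
    (htr : G.Adj t r) (hts : ¬ G.Adj t s) : c r ≠ c s :=
  fun hc => hts (h r s t hrs hst hc htr)

theorem exists_consistent_lt_thin {V : Type*} [Finite V] (G : SimpleGraph V) :
    ∃ f c : V → ℕ, Function.Injective f ∧ (∀ v, c v < thin G) ∧ Consistent G f c := by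
  have := Fintype.ofFinite V
  let e : V → ℕ := fun v => Fintype.equivFin V v
  have hne : {k | ∃ f c : V → ℕ, Function.Injective f ∧ (∀ v, c v < k) ∧
      Consistent G f c}.Nonempty :=
    ⟨Fintype.card V, e, e, Fin.val_injective.comp (Fintype.equivFin V).injective,
      fun v => (Fintype.equivFin V v).isLt, fun _ _ _ hrs _ hc => absurd hc hrs.ne⟩
  exact Nat.sInf_mem hne

namespace crownGraph

variable {n : ℕ}

theorem adj_swap_of_isLeft_eq {v w : Fin n ⊕ Fin n} (hside : v.isLeft = w.isLeft)
    (hvw : v ≠ w) : (crownGraph n).Adj w.swap v := by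
  rcases v with i | i <;> rcases w with j | j <;> simp_all [crownGraph, eq_comm]

theorem not_adj_swap_self (v : Fin n ⊕ Fin n) : ¬ (crownGraph n).Adj v.swap v := by
  rcases v with i | i <;> simp [crownGraph]

def firstOfPair (f : Fin n ⊕ Fin n → ℕ) (i : Fin n) : Fin n ⊕ Fin n :=
  if f (.inl i) < f (.inr i) then .inl i else .inr i

theorem firstOfPair_injective (f : Fin n ⊕ Fin n → ℕ) : Function.Injective (firstOfPair f) := by
  intro i j h
  unfold firstOfPair at h
  split_ifs at h <;> simpa using h

theorem lt_swap_firstOfPair {f : Fin n ⊕ Fin n → ℕ} (hf : Function.Injective f) (i : Fin n) :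
    f (firstOfPair f i) < f (firstOfPair f i).swap := by
  unfold firstOfPair
  split_ifs with h
  · exact h
  · exact lt_of_le_of_ne (not_lt.mp h) (hf.ne Sum.inr_ne_inl)

theorem color_ne_of_lt_swap {f c : Fin n ⊕ Fin n → ℕ} (hf : Function.Injective f)
    (hcons : Consistent (crownGraph n) f c) {v w : Fin n ⊕ Fin n}
    (hside : v.isLeft = w.isLeft) (hvw : v ≠ w)
    (hv : f v < f v.swap) (hw : f w < f w.swap) : c v ≠ c w := by
  rcases (hf.ne hvw).lt_or_gt with hlt | hlt
  · exact hcons.color_ne hlt hw (adj_swap_of_isLeft_eq hside hvw) (not_adj_swap_self w)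
  · exact (hcons.color_ne hlt hv (adj_swap_of_isLeft_eq hside.symm hvw.symm)
      (not_adj_swap_self v)).symm

theorem le_two_mul_of_consistent {f c : Fin n ⊕ Fin n → ℕ} {k : ℕ} (hf : Function.Injective f)
    (hc : ∀ v, c v < k) (hcons : Consistent (crownGraph n) f c) : n ≤ 2 * k := by
  let label : Fin n → Fin k × Bool := fun i =>
    (⟨c (firstOfPair f i), hc _⟩, (firstOfPair f i).isLeft)
  have hlabel : Function.Injective label := by
    intro i j hij
    simp only [label, Prod.mk.injEq, Fin.mk.injEq] at hij
    by_contra hne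
    exact color_ne_of_lt_swap hf hcons hij.2 ((firstOfPair_injective f).ne hne)
      (lt_swap_firstOfPair hf i) (lt_swap_firstOfPair hf j) hij.1
  simpa [mul_comm] using Fintype.card_le_of_injective label hlabel

end crownGraph

theorem thin_crownGraph_general (n : ℕ) : n ≤ 2 * thin (crownGraph n) := by
  obtain ⟨f, c, hf, hc, hcons⟩ := exists_consistent_lt_thin (crownGraph n)
  exact crownGraph.le_two_mul_of_consistent hf hc hcons

/-- For every `n ≥ 1`, the thinness of the crown graph `CR n` is at least `n/2`. -/
theorem thin_crownGraph (n : ℕ) (hn : 1 ≤ n) : n ≤ 2 * thin (crownGraph n) :=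
  thin_crownGraph_general n
end

section
/- For any graph G and any subset S of its vertices, thin(G) ≤ |V(G)| − |S| + thin(G[S]). -/
open SimpleGraph

/-!
Put the vertices outside `S` first, each in a class of its own, and then the vertices of `S`
in an optimal order and partition for `G[S]`. A class with two vertices lies inside `S`, and
everything after a vertex of `S` is in `S`, so every triple violating consistency in `G` would
already violate it in `G[S]`.
-/

section

variable {V : Type*} {G : SimpleGraph V}

theorem consistent_of_injective {f c : V → ℕ} (hc : Function.Injective c) : Consistent G f c := by
  intro _ _ _ hrs _ hcrs _
  obtain rfl := hc hcrs
  exact absurd hrs (lt_irrefl _)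

theorem Consistent.const_add {f c : V → ℕ} (h : Consistent G f c) (n : ℕ) :
    Consistent G (fun v => n + f v) c :=
  fun r s t hrs hst => h r s t (Nat.lt_of_add_lt_add_left hrs) (Nat.lt_of_add_lt_add_left hst)

theorem Consistent.of_induce {S : Set V} {f c : V → ℕ}
    (hS : Consistent (G.induce S) (fun v => f v) (fun v => c v))
    (hf : ∀ v ∉ S, ∀ w ∈ S, f v < f w) (hc : ∀ u v, u ∉ S → c u = c v → u = v) :
    Consistent G f c := by
  intro r s t hrs hst hcrs hadj
  by_cases hr : r ∈ S
  · have hs : s ∈ S := by_contra fun hs => (hc s r hs hcrs.symm ▸ hs) hr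
    have ht : t ∈ S := by_contra fun ht => (hf t ht s hs).not_gt hst
    exact hS ⟨r, hr⟩ ⟨s, hs⟩ ⟨t, ht⟩ hrs hst hcrs hadj
  · obtain rfl := hc r s hr hcrs
    exact absurd hrs (lt_irrefl _)

theorem thin_le_of_consistent {f c : V → ℕ} {k : ℕ} (hf : Function.Injective f)
    (hc : ∀ v, c v < k) (h : Consistent G f c) : thin G ≤ k :=
  Nat.sInf_le ⟨f, c, hf, hc, h⟩

theorem exists_consistent_thin [Finite V] (G : SimpleGraph V) :
    ∃ f c : V → ℕ, Function.Injective f ∧ (∀ v, c v < thin G) ∧ Consistent G f c := by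
  let e := Finite.equivFin V
  have hinj : Function.Injective fun v => (e v : ℕ) := Fin.val_injective.comp e.injective
  exact Nat.sInf_mem (s := {k | ∃ f c : V → ℕ, Function.Injective f ∧ (∀ v, c v < k) ∧
    Consistent G f c}) ⟨_, _, _, hinj, fun v => (e v).isLt, consistent_of_injective hinj⟩

theorem thin_le_thin_induce_add_card_compl [Finite V] (G : SimpleGraph V) (S : Set V) :
    thin G ≤ thin (G.induce S) + Nat.card ↥Sᶜ := by
  classical
  obtain ⟨f₀, c₀, hf₀, hc₀, hcons₀⟩ := exists_consistent_thin (G.induce S)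
  set k := thin (G.induce S)
  set n := Nat.card ↥Sᶜ
  let e := Finite.equivFin ↥Sᶜ
  let f : V → ℕ := fun v => if h : v ∈ S then n + f₀ ⟨v, h⟩ else e ⟨v, h⟩
  let c : V → ℕ := fun v => if h : v ∈ S then c₀ ⟨v, h⟩ else k + e ⟨v, h⟩
  have hfS : (fun v : S => f v) = fun v => n + f₀ v := funext fun v => dif_pos v.2
  have hcS : (fun v : S => c v) = c₀ := funext fun v => dif_pos v.2
  have hf : Function.Injective f :=
    Function.Injective.dite _ ((add_right_injective n).comp hf₀)
      (Fin.val_injective.comp e.injective) fun {_ x' _ hx'} =>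
        ((e ⟨x', hx'⟩).isLt.trans_le (Nat.le_add_right _ _)).ne'
  refine thin_le_of_consistent (c := c) hf (fun v => ?_) (Consistent.of_induce (S := S) ?_ ?_ ?_)
  · by_cases hv : v ∈ S
    · simpa [c, hv] using (hc₀ ⟨v, hv⟩).trans_le (Nat.le_add_right k n)
    · simp [c, hv, n]
  · rw [hfS, hcS]
    exact hcons₀.const_add n
  · intro v hv w hw
    simp only [f, hv, hw, dite_false, dite_true]
    omega
  · intro u v hu huv
    by_cases hv : v ∈ S
    · have := hc₀ ⟨v, hv⟩
      simp only [c, hu, hv, dite_false, dite_true] at huv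
      omega
    · simp only [c, hu, hv, dite_false, add_right_inj] at huv
      exact congrArg Subtype.val (e.injective (Fin.ext huv))

end

/-- For any graph `G` and any subset `S` of its vertices,
`thin G ≤ |V(G)| - |S| + thin (G[S])`. -/
theorem thin_le_card_sub_add {V : Type*} [Fintype V] (G : SimpleGraph V) (S : Finset V) :
    thin G ≤ Fintype.card V - S.card + thin (G.induce (S : Set V)) := by
  have hcard : Nat.card ↥(S : Set V)ᶜ = Fintype.card V - S.card := by
    rw [Nat.card_coe_set_eq, Set.ncard_compl, Set.ncard_coe_finset, Nat.card_eq_fintype_card]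
  rw [add_comm, ← hcard]
  exact thin_le_thin_induce_add_card_compl G S
end

section
/- For every graph G, pthin(3G ∨ K₁) = pthin(G) + 1, where 3G is the disjoint union of three copies of G. -/
open SimpleGraph

/-- The disjoint union of `t` copies of `G`. -/
def copiesG {V : Type*} (t : ℕ) (G : SimpleGraph V) : SimpleGraph (Fin t × V) where
  Adj x y := x.1 = y.1 ∧ G.Adj x.2 y.2
  symm := ⟨fun _ _ h => ⟨h.1.symm, h.2.symm⟩⟩
  loopless := ⟨fun _ h => G.loopless.irrefl _ h.2⟩

/-!
Upper bound: lay out the three copies of `G` one after another with the classes of an optimal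
layout of `G`, and put the universal vertex last, in a class of its own.

Lower bound: in a layout of `3G ∨ K₁`, two vertices in the class of the universal vertex `u`
and on the same side of `u` are adjacent, by consistency applied to the triple they form with
`u`. Hence that class meets at most two of the three mutually non-adjacent copies, and the
layout restricted to a copy it misses uses one class fewer.
-/

open Function

section Layouts

variable {V W : Type*} {G : SimpleGraph V} {H : SimpleGraph W}

lemma pthin_le_of_stronglyConsistent {k : ℕ} {f c : V → ℕ} (hf : Injective f)
    (hc : ∀ v, c v < k) (h : StronglyConsistent G f c) : pthin G ≤ k :=
  Nat.sInf_le ⟨f, c, hf, hc, h⟩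

lemma stronglyConsistent_self (f : V → ℕ) : StronglyConsistent G f f :=
  ⟨fun _ _ _ hrs _ hc _ => absurd hc hrs.ne, fun _ _ _ _ hst hc _ => absurd hc hst.ne⟩

lemma exists_stronglyConsistent_card [Fintype V] (G : SimpleGraph V) :
    ∃ f c : V → ℕ, Injective f ∧ (∀ v, c v < Fintype.card V) ∧ StronglyConsistent G f c :=
  ⟨_, _, Fin.val_injective.comp (Fintype.equivFin V).injective,
    fun v => (Fintype.equivFin V v).isLt, stronglyConsistent_self _⟩

lemma pthin_le_card [Fintype V] (G : SimpleGraph V) : pthin G ≤ Fintype.card V :=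
  Nat.sInf_le (exists_stronglyConsistent_card G)

lemma exists_stronglyConsistent_pthin [Fintype V] (G : SimpleGraph V) :
    ∃ f c : V → ℕ, Injective f ∧ (∀ v, c v < pthin G) ∧ StronglyConsistent G f c := by
  have hne : {k | ∃ f c : V → ℕ, Injective f ∧ (∀ v, c v < k) ∧
      StronglyConsistent G f c}.Nonempty := ⟨_, exists_stronglyConsistent_card G⟩
  exact Nat.sInf_mem hne

lemma StronglyConsistent.comap {f c : W → ℕ} (h : StronglyConsistent H f c) (φ : G ↪g H)
    {c' : V → ℕ} (hc' : ∀ v w, c' v = c' w → c (φ v) = c (φ w)) :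
    StronglyConsistent G (f ∘ φ) c' :=
  ⟨fun r s t hrs hst hc hadj => φ.map_adj_iff.1 <|
      h.1 (φ r) (φ s) (φ t) hrs hst (hc' r s hc) (φ.map_adj_iff.2 hadj),
    fun r s t hrs hst hc hadj => φ.map_adj_iff.1 <|
      h.2 (φ r) (φ s) (φ t) hrs hst (hc' s t hc) (φ.map_adj_iff.2 hadj)⟩

lemma pthin_le_pred_of_embedding (φ : G ↪g H) {k : ℕ} {f c : W → ℕ} (hf : Injective f)
    (hc : ∀ w, c w < k) (h : StronglyConsistent H f c) {w : W} (hw : ∀ v, c (φ v) ≠ c w) :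
    pthin G ≤ k - 1 := by
  have hwk := hc w
  refine pthin_le_of_stronglyConsistent
    (c := fun v => if c (φ v) < c w then c (φ v) else c (φ v) - 1)
    (hf.comp φ.injective) (fun v => ?_) (h.comap φ fun u v huv => ?_)
  · have := hc (φ v)
    have := hw v
    split_ifs <;> omega
  · have := hw u
    have := hw v
    split_ifs at huv <;> omega

end Layouts

section Join

variable {V₁ V₂ : Type*} {G₁ : SimpleGraph V₁} {G₂ : SimpleGraph V₂}

@[simp] lemma joinG_adj_inl_inl {u v : V₁} :
    (joinG G₁ G₂).Adj (Sum.inl u) (Sum.inl v) ↔ G₁.Adj u v := Iff.rfl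

@[simp] lemma joinG_adj_inr_inr {u v : V₂} :
    (joinG G₁ G₂).Adj (Sum.inr u) (Sum.inr v) ↔ G₂.Adj u v := Iff.rfl

@[simp] lemma joinG_adj_inl_inr {u : V₁} {v : V₂} :
    (joinG G₁ G₂).Adj (Sum.inl u) (Sum.inr v) := trivial

@[simp] lemma joinG_adj_inr_inl {u : V₂} {v : V₁} :
    (joinG G₁ G₂).Adj (Sum.inr u) (Sum.inl v) := trivial

def joinG.inlEmbedding : G₁ ↪g joinG G₁ G₂ where
  toEmbedding := ⟨Sum.inl, Sum.inl_injective⟩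
  map_rel_iff' := Iff.rfl

/-- `G₂` is laid out after `G₁`, on fresh classes. Classes then never mix the two sides, so
every triple with two vertices in one class lies in one side or is settled by the join edges. -/
lemma pthin_joinG_le [Fintype V₁] [Fintype V₂] (G₁ : SimpleGraph V₁) (G₂ : SimpleGraph V₂) :
    pthin (joinG G₁ G₂) ≤ pthin G₁ + pthin G₂ := by
  obtain ⟨f₁, c₁, hf₁, hc₁, h₁, h₁'⟩ := exists_stronglyConsistent_pthin G₁
  obtain ⟨f₂, c₂, hf₂, hc₂, h₂, h₂'⟩ := exists_stronglyConsistent_pthin G₂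
  obtain ⟨N, hN⟩ := Finite.exists_le fun v => f₁ v + 1
  refine pthin_le_of_stronglyConsistent (f := Sum.elim f₁ (N + f₂ ·))
    (c := Sum.elim c₁ (pthin G₁ + c₂ ·)) ?_ ?_ ⟨?_, ?_⟩
  · rintro (u | u) (v | v) huv <;> simp only [Sum.elim_inl, Sum.elim_inr] at huv
    · rw [hf₁ huv]
    · exact absurd huv (by have := hN u; omega)
    · exact absurd huv (by have := hN v; omega)
    · rw [hf₂ (Nat.add_left_cancel huv)]
  · rintro (v | v) <;> simp only [Sum.elim_inl, Sum.elim_inr]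
    · exact (hc₁ v).trans_le le_self_add
    · exact Nat.add_lt_add_left (hc₂ v) _
  · rintro (r | r) (s | s) (t | t) hrs hst hc hadj <;>
      simp only [Sum.elim_inl, Sum.elim_inr, joinG_adj_inl_inl, joinG_adj_inr_inr,
        joinG_adj_inl_inr, joinG_adj_inr_inl] at hrs hst hc hadj ⊢
    all_goals first
      | exact h₁ r s t hrs hst hc hadj
      | exact h₂ r s t (by omega) (by omega) (by omega) hadj
      | exfalso; first | (have := hc₁ r; omega) | (have := hc₁ s; omega)
  · rintro (r | r) (s | s) (t | t) hrs hst hc hadj <;>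
      simp only [Sum.elim_inl, Sum.elim_inr, joinG_adj_inl_inl, joinG_adj_inr_inr,
        joinG_adj_inl_inr, joinG_adj_inr_inl] at hrs hst hc hadj ⊢
    all_goals first
      | exact h₁' r s t hrs hst hc hadj
      | exact h₂' r s t (by omega) (by omega) (by omega) hadj
      | exfalso; first | (have := hc₁ s; omega) | (have := hN t; omega)

end Join

section Copies

variable {V : Type*} {G : SimpleGraph V} {t : ℕ}

@[simp] lemma copiesG_adj {x y : Fin t × V} :
    (copiesG t G).Adj x y ↔ x.1 = y.1 ∧ G.Adj x.2 y.2 := Iff.rfl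

def copiesG.embedding (i : Fin t) : G ↪g copiesG t G where
  toEmbedding := ⟨(i, ·), Prod.mk_right_injective i⟩
  map_rel_iff' := by simp

lemma mul_add_div_of_lt {N i a : ℕ} (ha : a < N) : (N * i + a) / N = i := by
  rw [Nat.mul_add_div ha.pos, Nat.div_eq_of_lt ha, add_zero]

/-- Copy `i` occupies the positions `[N * i, N * (i + 1))` and keeps the classes of `G`; a triple
whose outer vertices lie in one copy lies entirely in that copy. -/
lemma pthin_copiesG_le [Fintype V] (t : ℕ) (G : SimpleGraph V) :
    pthin (copiesG t G) ≤ pthin G := by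
  obtain ⟨f, c, hf, hc, h, h'⟩ := exists_stronglyConsistent_pthin G
  obtain ⟨N, hN⟩ := Finite.exists_le fun v => f v + 1
  have hblock : ∀ x : Fin t × V, (N * x.1 + f x.2) / N = x.1 := fun x => mul_add_div_of_lt (hN _)
  have hsame : ∀ x y z : Fin t × V, N * x.1 + f x.2 < N * y.1 + f y.2 →
      N * y.1 + f y.2 < N * z.1 + f z.2 → x.1 = z.1 → y.1 = x.1 := by
    intro x y z hxy hyz hxz
    have hxy' := Nat.div_le_div_right (c := N) hxy.le
    have hyz' := Nat.div_le_div_right (c := N) hyz.le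
    simp only [hblock] at hxy' hyz'
    omega
  refine pthin_le_of_stronglyConsistent (f := fun x => N * x.1 + f x.2) (c := fun x => c x.2)
    ?_ (fun x => hc x.2) ⟨?_, ?_⟩
  · rintro x y hxy
    have hi : x.1 = y.1 := Fin.ext (by simpa [hblock] using congrArg (· / N) hxy)
    simp only [hi, Nat.add_left_cancel_iff] at hxy
    exact Prod.ext hi (hf hxy)
  · rintro r s t hrs hst hc ⟨htr, hadj⟩
    have hsr := hsame r s t hrs hst htr.symm
    simp only [hsr, htr] at hrs hst
    exact ⟨htr.trans hsr.symm, h _ _ _ (by omega) (by omega) hc hadj⟩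
  · rintro r s t hrs hst hc ⟨htr, hadj⟩
    have hsr := hsame r s t hrs hst htr.symm
    simp only [hsr, htr] at hrs hst
    exact ⟨hsr, h' _ _ _ (by omega) (by omega) hc hadj⟩

end Copies

lemma StronglyConsistent.adj_of_class_eq {V : Type*} {G : SimpleGraph V} {f c : V → ℕ}
    (h : StronglyConsistent G f c) {u x y : V} (hx : c x = c u) (hy : c y = c u)
    (hxy : f x < f y) (hside : f u < f x ∨ f y < f u) (hux : G.Adj u x) (huy : G.Adj u y) :
    G.Adj y x :=
  hside.elim (fun hux' => h.1 u x y hux' hxy hx.symm huy.symm)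
    (fun hyu => h.2 x y u hxy hyu hy hux)

lemma exists_copy_forall_class_ne {V W : Type*} {G : SimpleGraph V} {K : SimpleGraph W}
    {f c : Fin 3 × V ⊕ W → ℕ} (hf : Injective f)
    (h : StronglyConsistent (joinG (copiesG 3 G) K) f c) (w : W) : ∃ i : Fin 3, ∀ v, c (Sum.inl (i, v)) ≠ c (Sum.inr w) := by
  by_contra! hall
  choose x hx using hall
  have hne : ∀ i, f (Sum.inl (i, x i)) ≠ f (Sum.inr w) := fun i hi => Sum.inl_ne_inr (hf hi)
  obtain ⟨i, j, hij, hside⟩ := Fintype.exists_ne_map_eq_of_card_lt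
    (fun i => decide (f (Sum.inr w) < f (Sum.inl (i, x i)))) (by simp)
  wlog hlt : f (Sum.inl (i, x i)) < f (Sum.inl (j, x j)) generalizing i j
  · refine this j i hij.symm hside.symm (lt_of_le_of_ne (not_lt.1 hlt) fun hji => hij ?_)
    exact (congrArg Prod.fst (Sum.inl_injective (hf hji))).symm
  have hside' : f (Sum.inr w) < f (Sum.inl (i, x i)) ∨ f (Sum.inl (j, x j)) < f (Sum.inr w) := by
    have := hne i
    have := hne j
    simp only [decide_eq_decide] at hside
    omega
  exact hij (copiesG_adj.1 (h.adj_of_class_eq (hx i) (hx j) hlt hside' trivial trivial)).1.symm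

lemma pthin_add_one_le_pthin_joinG_copiesG_three {V W : Type*} [Fintype V] [Fintype W]
    [Nonempty W] (G : SimpleGraph V) (K : SimpleGraph W) :
    pthin G + 1 ≤ pthin (joinG (copiesG 3 G) K) := by
  obtain ⟨f, c, hf, hc, h⟩ := exists_stronglyConsistent_pthin (joinG (copiesG 3 G) K)
  obtain ⟨w⟩ := ‹Nonempty W›
  obtain ⟨i, hi⟩ := exists_copy_forall_class_ne hf h w
  have := pthin_le_pred_of_embedding (joinG.inlEmbedding.comp (copiesG.embedding i)) hf hc h hi
  have := hc (Sum.inr w)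
  omega

/-- For every graph `G`, `pthin (3G ∨ K₁) = pthin G + 1`. -/
theorem pthin_three_copies_join_K1 {V : Type*} [Fintype V] (G : SimpleGraph V) :
    pthin (joinG (copiesG 3 G) (⊥ : SimpleGraph Unit)) = pthin G + 1 :=
  le_antisymm
    ((pthin_joinG_le _ _).trans <|
      add_le_add (pthin_copiesG_le 3 G) ((pthin_le_card _).trans_eq Fintype.card_unit))
    (pthin_add_one_le_pthin_joinG_copiesG_three G ⊥)
end
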